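/- There exists a universal constant K > 0 such that for every n ≥ 1 and all vectors v₁,…,vₙ ∈ ℝ³, one has 1 + U(|v₁ + ⋯ + vₙ|) ≤ K (log n) ∏_{j=1}^n (1 + U(|vⱼ|)), where for n = 1 the factor log n is replaced by 1 (i.e., the inequality 1 + U(|∑vⱼ|) ≤ K max(1, log n) ∏(1 + U(|vⱼ|)) holds). -/

import Mathlib

open Real

/-- Key integral: ∫_c^1 dz/(1+a(1-z)) = log(1+a(1-c))/a. -/
lemma key_int {a : ℝ} (ha : 0 < a) {c : ℝ} (hc : c ≤ 1) :
    ∫ z in c..(1:ℝ), 1 / (1 + a * (1 - z)) = Real.log (1 + a * (1 - c)) / a := by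
  have hpos : ∀ z ∈ Set.uIcc c (1:ℝ), 0 < 1 + a * (1 - z) := by
    intro z hz
    rw [Set.uIcc_of_le hc] at hz
    nlinarith [hz.2]
  have hderiv : ∀ z ∈ Set.uIcc c (1:ℝ),
      HasDerivAt (fun z => -(Real.log (1 + a * (1 - z)) / a)) (1 / (1 + a * (1 - z))) z := by
    intro z hz
    have h1 : HasDerivAt (fun z : ℝ => 1 + a * (1 - z)) (-a) z := by
      simpa using (((hasDerivAt_id z).const_sub 1).const_mul a).const_add 1
    have h2 := ((Real.hasDerivAt_log (hpos z hz).ne').comp z h1).div_const a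
    have h3 : HasDerivAt (fun z => -(Real.log (1 + a * (1 - z)) / a))
        (-((1 + a * (1 - z))⁻¹ * -a / a)) z := h2.neg
    convert h3 using 1
    have hd := (hpos z hz).ne'
    have ha' := ha.ne'
    field_simp
  have hint : IntervalIntegrable (fun z => 1 / (1 + a * (1 - z))) MeasureTheory.volume c 1 := by
    apply ContinuousOn.intervalIntegrable
    exact ContinuousOn.div continuousOn_const
      (by fun_prop) (fun z hz => (hpos z hz).ne')
  have := intervalIntegral.integral_eq_sub_of_hasDerivAt hderiv hint
  rw [this]
  simp

/-- The Uehling multiplier `U`. -/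
noncomputable def U (r : ℝ) : ℝ :=
  r ^ 2 / (4 * π) * ∫ z in (0:ℝ)..1, (z ^ 2 - z ^ 4 / 3) / (1 + r ^ 2 * (1 - z ^ 2) / 4)

lemma denom_pos (r : ℝ) {z : ℝ} (h0 : 0 ≤ z) (h1 : z ≤ 1) :
    0 < 1 + r ^ 2 * (1 - z ^ 2) / 4 := by
  have hz2 : z ^ 2 ≤ 1 := by nlinarith
  nlinarith [mul_nonneg (sq_nonneg r) (by linarith : (0:ℝ) ≤ 1 - z ^ 2)]

lemma num_nonneg {z : ℝ} (h0 : 0 ≤ z) (h1 : z ≤ 1) : 0 ≤ z ^ 2 - z ^ 4 / 3 := by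
  have hz2 : z ^ 2 ≤ 1 := by nlinarith
  nlinarith [mul_nonneg (sq_nonneg z) (by linarith : (0:ℝ) ≤ 1 - z ^ 2 / 3)]

lemma integrand_intble (r : ℝ) {c : ℝ} (hc0 : 0 ≤ c) (hc1 : c ≤ 1) :
    IntervalIntegrable (fun z => (z ^ 2 - z ^ 4 / 3) / (1 + r ^ 2 * (1 - z ^ 2) / 4))
      MeasureTheory.volume c 1 := by
  apply ContinuousOn.intervalIntegrable
  apply ContinuousOn.div (by fun_prop) (by fun_prop)
  intro z hz
  rw [Set.uIcc_of_le hc1] at hz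
  exact (denom_pos r (hc0.trans hz.1) hz.2).ne'

lemma U_nonneg (r : ℝ) : 0 ≤ U r := by
  apply mul_nonneg (by positivity)
  apply intervalIntegral.integral_nonneg zero_le_one
  intro u hu
  have hd := denom_pos r hu.1 hu.2
  have := num_nonneg hu.1 hu.2
  positivity

lemma U_le (r : ℝ) : U r ≤ Real.log (1 + r ^ 2 / 4) / π := by
  rcases eq_or_ne r 0 with h | h
  · simp [U, h]
  have ha : (0:ℝ) < r ^ 2 / 4 := by positivity
  have hI : (∫ z in (0:ℝ)..1, (z ^ 2 - z ^ 4 / 3) / (1 + r ^ 2 * (1 - z ^ 2) / 4))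
      ≤ ∫ z in (0:ℝ)..1, 1 / (1 + (r ^ 2 / 4) * (1 - z)) := by
    apply intervalIntegral.integral_mono_on zero_le_one (integrand_intble r le_rfl zero_le_one)
    · apply ContinuousOn.intervalIntegrable
      apply ContinuousOn.div continuousOn_const (by fun_prop)
      intro z hz
      rw [Set.uIcc_of_le zero_le_one] at hz
      nlinarith [hz.2, sq_nonneg r, mul_nonneg (sq_nonneg r) (by linarith [hz.2] : (0:ℝ) ≤ 1 - z)]
    · intro z hz
      have hd1 : 0 < 1 + (r ^ 2 / 4) * (1 - z) := by
        nlinarith [mul_nonneg (sq_nonneg r) (by linarith [hz.2] : (0:ℝ) ≤ 1 - z)]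
      have hz2 : z ^ 2 ≤ 1 := by nlinarith [hz.1, hz.2]
      apply div_le_div₀ zero_le_one (by nlinarith [num_nonneg hz.1 hz.2]) hd1
      nlinarith [mul_nonneg (sq_nonneg r) (mul_nonneg hz.1 (by linarith [hz.2] : (0:ℝ) ≤ 1 - z))]
  have hk : (∫ z in (0:ℝ)..1, 1 / (1 + (r ^ 2 / 4) * (1 - z)))
      = Real.log (1 + r ^ 2 / 4) / (r ^ 2 / 4) := by
    rw [key_int ha (by norm_num : (0:ℝ) ≤ 1)]
    norm_num
  calc U r ≤ r ^ 2 / (4 * π) * (Real.log (1 + r ^ 2 / 4) / (r ^ 2 / 4)) := by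
        unfold U
        exact mul_le_mul_of_nonneg_left (hI.trans_eq hk) (by positivity)
    _ = Real.log (1 + r ^ 2 / 4) / π := by
        field_simp

lemma U_ge (r : ℝ) : Real.log (1 + r ^ 2 / 4) / (12 * π) ≤ U r := by
  rcases eq_or_ne r 0 with h | h
  · norm_num [U, h]
  have hb : (0:ℝ) < r ^ 2 / 2 := by positivity
  have h1 : (∫ z in (1/2:ℝ)..1, (1/6 : ℝ) * (1 / (1 + (r ^ 2 / 2) * (1 - z))))
      ≤ ∫ z in (1/2:ℝ)..1, (z ^ 2 - z ^ 4 / 3) / (1 + r ^ 2 * (1 - z ^ 2) / 4) := by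
    apply intervalIntegral.integral_mono_on (by norm_num)
    · apply ContinuousOn.intervalIntegrable
      apply ContinuousOn.mul continuousOn_const
      apply ContinuousOn.div continuousOn_const (by fun_prop)
      intro z hz
      rw [Set.uIcc_of_le (by norm_num : (1/2:ℝ) ≤ 1)] at hz
      nlinarith [mul_nonneg (sq_nonneg r) (by linarith [hz.2] : (0:ℝ) ≤ 1 - z)]
    · exact integrand_intble r (by norm_num) (by norm_num)
    · intro z hz
      have hz1 : (1/2:ℝ) ≤ z := hz.1
      have hz2 : z ≤ 1 := hz.2
      have hzsq : 1/4 ≤ z ^ 2 := by nlinarith [sq_nonneg (z - 1/2)]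
      have hzsq' : z ^ 2 ≤ 1 := by nlinarith
      have hd2 : 0 < 1 + r ^ 2 * (1 - z ^ 2) / 4 := denom_pos r (by linarith) hz2
      rw [mul_one_div]
      apply div_le_div₀ (by nlinarith [num_nonneg (by linarith : (0:ℝ) ≤ z) hz2])
        (by nlinarith [mul_nonneg (by linarith : (0:ℝ) ≤ z ^ 2 - 1/4) (by linarith : (0:ℝ) ≤ 1 - z ^ 2)])
        hd2
      nlinarith [mul_nonneg (sq_nonneg r) (sq_nonneg (1 - z))]
  have h2 : (∫ z in (1/2:ℝ)..1, (z ^ 2 - z ^ 4 / 3) / (1 + r ^ 2 * (1 - z ^ 2) / 4))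
      ≤ ∫ z in (0:ℝ)..1, (z ^ 2 - z ^ 4 / 3) / (1 + r ^ 2 * (1 - z ^ 2) / 4) := by
    apply intervalIntegral.integral_mono_interval (by norm_num) (by norm_num) le_rfl
    · apply MeasureTheory.ae_restrict_of_forall_mem measurableSet_Ioc
      intro z hz
      have hd := denom_pos r (le_of_lt hz.1) hz.2
      have := num_nonneg hz.1.le hz.2
      positivity
    · exact integrand_intble r le_rfl zero_le_one
  have hk : (∫ z in (1/2:ℝ)..1, (1/6 : ℝ) * (1 / (1 + (r ^ 2 / 2) * (1 - z))))
      = (1/6 : ℝ) * (Real.log (1 + r ^ 2 / 4) / (r ^ 2 / 2)) := by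
    rw [intervalIntegral.integral_const_mul, key_int hb (by norm_num : (1/2:ℝ) ≤ 1)]
    ring_nf
  have hle : (1/6 : ℝ) * (Real.log (1 + r ^ 2 / 4) / (r ^ 2 / 2))
      ≤ ∫ z in (0:ℝ)..1, (z ^ 2 - z ^ 4 / 3) / (1 + r ^ 2 * (1 - z ^ 2) / 4) :=
    hk ▸ (h1.trans h2)
  calc Real.log (1 + r ^ 2 / 4) / (12 * π)
      = r ^ 2 / (4 * π) * ((1/6 : ℝ) * (Real.log (1 + r ^ 2 / 4) / (r ^ 2 / 2))) := by
        field_simp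
        ring
    _ ≤ U r := by
        unfold U
        exact mul_le_mul_of_nonneg_left hle (by positivity)

theorem uehling_product_bound :
    ∃ K : ℝ, 0 < K ∧ ∀ n : ℕ, 1 ≤ n → ∀ v : Fin n → EuclideanSpace ℝ (Fin 3),
      1 + U ‖∑ j, v j‖ ≤
        K * max 1 (Real.log n) * ∏ j, (1 + U ‖v j‖) := by
  refine ⟨24, by norm_num, ?_⟩
  intro n hn v
  have hπ : (3:ℝ) < π := Real.pi_gt_three
  set L := max 1 (Real.log n) with hL
  have hL1 : (1:ℝ) ≤ L := le_max_left _ _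
  have hLn : Real.log n ≤ L := le_max_right _ _
  obtain ⟨j₀, -, hj₀⟩ := Finset.exists_max_image Finset.univ (fun j => ‖v j‖)
      (Finset.univ_nonempty_iff.mpr ⟨⟨0, hn⟩⟩)
  set M := ‖v j₀‖ with hMdef
  have hM0 : (0:ℝ) ≤ M := norm_nonneg _
  set T := max 0 (Real.log M) with hT
  have hT0 : (0:ℝ) ≤ T := le_max_left _ _
  set P := ∏ j, (1 + U ‖v j‖) with hP
  have hfac : ∀ j ∈ Finset.univ, (1:ℝ) ≤ 1 + U ‖v j‖ := fun j _ => by linarith [U_nonneg ‖v j‖]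
  have hPM : 1 + U M ≤ P := by
    rw [hP, ← Finset.mul_prod_erase Finset.univ _ (Finset.mem_univ j₀)]
    have h1 : (1:ℝ) ≤ ∏ j ∈ Finset.univ.erase j₀, (1 + U ‖v j‖) := by
      calc (1:ℝ) = ∏ _j ∈ Finset.univ.erase j₀, (1:ℝ) := by simp
        _ ≤ _ := Finset.prod_le_prod (fun i _ => zero_le_one)
              (fun i _ => hfac i (Finset.mem_univ i))
    have h2 := mul_le_mul_of_nonneg_left h1 (by linarith [U_nonneg M] : (0:ℝ) ≤ 1 + U M)
    simpa using h2
  -- lower bound: T/(12π) ≤ U M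
  have hUM : T / (12 * π) ≤ U M := by
    rcases le_or_gt M 1 with hM1 | hM1
    · have hTz : T = 0 := max_eq_left (Real.log_nonpos hM0 hM1)
      rw [hTz]
      simpa using U_nonneg M
    · have hT' : T = Real.log M := max_eq_right (Real.log_nonneg hM1.le)
      have hlogM : Real.log M ≤ Real.log (1 + M ^ 2 / 4) := by
        apply Real.log_le_log (by linarith)
        nlinarith [sq_nonneg (M / 2 - 1)]
      calc T / (12 * π) ≤ Real.log (1 + M ^ 2 / 4) / (12 * π) := by
            rw [hT']
            gcongr
        _ ≤ U M := U_ge M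
  -- upper bound on ‖∑ v‖
  set s := ‖∑ j, v j‖ with hs
  have hs0 : (0:ℝ) ≤ s := norm_nonneg _
  have hsle : s ≤ n * M := by
    calc s ≤ ∑ j, ‖v j‖ := norm_sum_le _ _
      _ ≤ Finset.univ.card • M := Finset.sum_le_card_nsmul _ _ _
            (fun j _ => hj₀ j (Finset.mem_univ j))
      _ = n * M := by simp [mul_comm]
  have hn1 : (1:ℝ) ≤ (n:ℝ) := by exact_mod_cast hn
  -- chain of log bounds
  have hlog1 : Real.log (1 + s ^ 2 / 4) ≤ 2 * Real.log (1 + s) := by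
    rw [show (2:ℝ) * Real.log (1 + s) = Real.log ((1 + s) ^ 2) by
      rw [Real.log_pow]; push_cast; ring]
    apply Real.log_le_log (by positivity)
    nlinarith
  have hlog2 : Real.log (1 + s) ≤ Real.log n + Real.log (1 + M) := by
    rw [← Real.log_mul (by positivity) (by positivity)]
    apply Real.log_le_log (by positivity)
    nlinarith
  have hlog3 : Real.log (1 + M) ≤ 1 + T := by
    rcases le_or_gt M 1 with hM1 | hM1
    · calc Real.log (1 + M) ≤ Real.log 2 := Real.log_le_log (by positivity) (by linarith)
        _ ≤ 1 := by linarith [Real.log_two_lt_d9]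
        _ ≤ 1 + T := by linarith
    · have hT' : T = Real.log M := max_eq_right (Real.log_nonneg hM1.le)
      calc Real.log (1 + M) ≤ Real.log (2 * M) := Real.log_le_log (by positivity) (by linarith)
        _ = Real.log 2 + Real.log M := Real.log_mul two_ne_zero (by positivity)
        _ ≤ 1 + T := by rw [hT']; linarith [Real.log_two_lt_d9]
  have hUs : U s ≤ 2 * (L + 1 + T) / π := by
    calc U s ≤ Real.log (1 + s ^ 2 / 4) / π := U_le s
      _ ≤ (2 * Real.log (1 + s)) / π := by gcongr
      _ ≤ (2 * (Real.log n + Real.log (1 + M))) / π := by gcongr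
      _ ≤ (2 * (L + (1 + T))) / π := by gcongr
      _ = 2 * (L + 1 + T) / π := by ring
  -- final arithmetic
  have hπ0 : (0:ℝ) < π := by linarith
  have hkey : 1 + 2 * (L + 1 + T) / π ≤ 24 * L * (1 + T / (12 * π)) := by
    rw [← sub_nonneg]
    have heq : 24 * L * (1 + T / (12 * π)) - (1 + 2 * (L + 1 + T) / π)
        = (24 * L * π - π - 2 * (L + 1 + T) + 2 * L * T) / π := by
      field_simp
      ring
    rw [heq]
    apply div_nonneg _ hπ0.le
    nlinarith [mul_nonneg (by linarith : (0:ℝ) ≤ L - 1) hT0,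
      mul_nonneg (by linarith : (0:ℝ) ≤ 24 * L - 1) (by linarith : (0:ℝ) ≤ π - 3)]
  calc 1 + U s ≤ 1 + 2 * (L + 1 + T) / π := by linarith
    _ ≤ 24 * L * (1 + T / (12 * π)) := hkey
    _ ≤ 24 * L * (1 + U M) := by
        have h24 : (0:ℝ) ≤ 24 * L := by linarith
        exact mul_le_mul_of_nonneg_left (by linarith) h24
    _ ≤ 24 * L * P := by
        have h24 : (0:ℝ) ≤ 24 * L := by linarith
        exact mul_le_mul_of_nonneg_left hPM h24
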